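/- arXiv:1108.5404 — 5 statements merged into one kernel-verified Lean document; each statement's English description precedes it below -/
import Mathlib

section
/- For any charged partition γ and any residue i modulo n (n ≥ 2), the difference a_i(γ) − r_i(γ) between the number of addable i-colored boxes and the number of removable i-colored boxes of γ equals ⟨wt(γ), α_i⟩, where wt(γ) is the ŝl_n-weight of the basis vector ⟨γ| of Fock space; in particular this difference is finite. -/
/-- A charged partition: an integer charge together with a partition
(weakly decreasing, eventually zero sequence of naturals). -/
structure ChargedPartition where
  charge : ℤ
  parts : ℕ → ℕ
  antitone : ∀ ⦃i j : ℕ⦄, i ≤ j → parts j ≤ parts i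
  eventually_zero : ∃ N : ℕ, ∀ j : ℕ, N ≤ j → parts j = 0

/-- `AddBox γ μ k` : μ is obtained from γ by adding one box of (integer) content `k`
(content = charge + column − row). -/
def AddBox (γ μ : ChargedPartition) (k : ℤ) : Prop :=
  μ.charge = γ.charge ∧
  ∃ r : ℕ, μ.parts = Function.update γ.parts r (γ.parts r + 1) ∧
    (γ.charge + (γ.parts r : ℤ) - (r : ℤ)) = k

/-- `RemoveBox γ μ k` : μ is obtained from γ by removing one box of content `k`. -/
def RemoveBox (γ μ : ChargedPartition) (k : ℤ) : Prop := AddBox μ γ k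

/-- Removing one box whose color (content mod n) is `i`. -/
def RemoveBoxC (n : ℕ) (γ μ : ChargedPartition) (i : ZMod n) : Prop :=
  ∃ k : ℤ, (k : ZMod n) = i ∧ RemoveBox γ μ k

/-- Adding one box whose color (content mod n) is `i`. -/
def AddBoxC (n : ℕ) (γ μ : ChargedPartition) (i : ZMod n) : Prop :=
  ∃ k : ℤ, (k : ZMod n) = i ∧ AddBox γ μ k

/-- Fermionic Fock space: the free ℂ-vector space on charged partitions. -/
abbrev Fock := ChargedPartition →₀ ℂ

/-- The Chevalley operator `E i` : ⟨γ|E_i = Σ ⟨μ| over μ obtained from γ by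
removing one i-colored box. -/
noncomputable def Eop (n : ℕ) (i : ZMod n) : Fock →ₗ[ℂ] Fock :=
  Finsupp.lift Fock ℂ ChargedPartition
    (fun γ => ∑ᶠ μ ∈ {μ : ChargedPartition | RemoveBoxC n γ μ i}, Finsupp.single μ (1 : ℂ))

/-- The Chevalley operator `F i` : ⟨γ|F_i = Σ ⟨μ| over μ obtained from γ by
adding one i-colored box. -/
noncomputable def Fop (n : ℕ) (i : ZMod n) : Fock →ₗ[ℂ] Fock :=
  Finsupp.lift Fock ℂ ChargedPartition
    (fun γ => ∑ᶠ μ ∈ {μ : ChargedPartition | AddBoxC n γ μ i}, Finsupp.single μ (1 : ℂ))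

/-- The number of boxes of γ of color `c` (content mod n). -/
noncomputable def boxCount (n : ℕ) (γ : ChargedPartition) (c : ZMod n) : ℕ :=
  Set.ncard {p : ℕ × ℕ | p.2 < γ.parts p.1 ∧
    ((γ.charge + (p.2 : ℤ) - (p.1 : ℤ) : ℤ) : ZMod n) = c}

/-!
Write `c` for the charge and `λ` for the parts. A box can be added at the end of row `r` iff
`r = 0` or `λ r < λ (r - 1)`, with content `c + λ r - r`, and removed from row `r` iff
`λ (r + 1) < λ r`, with content `c + λ r - r - 1`. When `λ (r + 1) = λ r`, row `r + 1` admits no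
addition, row `r` admits no removal, and the two contents coincide. Hence for any function `e` of
the content, summing `e` over addable boxes minus removable boxes telescopes, row by row, to
`e c` plus the sum over all boxes of the second difference `e (x + 1) - 2 e x + e (x - 1)`.
Taking for `e` the indicator of the color `i` gives
`a_i - r_i = [c ≡ i] + N_{i-1} + N_{i+1} - 2 N_i`, where `N_j` counts the boxes of color `j`.
-/

open Finset Function

theorem antitone_update_add_one {f : ℕ → ℕ} (hf : Antitone f) {r : ℕ}
    (hr : r = 0 ∨ f r < f (r - 1)) : Antitone (update f r (f r + 1)) := by
  refine antitone_nat_of_succ_le fun k => ?_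
  have := hf (by omega : k ≤ k + 1)
  rcases eq_or_ne (k + 1) r with rfl | h₁
  · rw [update_self, update_of_ne (by omega)]
    simp only [Nat.add_eq_zero_iff, one_ne_zero, and_false, add_tsub_cancel_right,
      false_or] at hr
    omega
  rcases eq_or_ne k r with rfl | h₂
  · rw [update_self, update_of_ne h₁]
    omega
  · rwa [update_of_ne h₁, update_of_ne h₂]

theorem antitone_update_sub_one {f : ℕ → ℕ} (hf : Antitone f) {r : ℕ}
    (hr : f (r + 1) < f r) : Antitone (update f r (f r - 1)) := by
  refine antitone_nat_of_succ_le fun k => ?_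
  have := hf (by omega : k ≤ k + 1)
  rcases eq_or_ne (k + 1) r with rfl | h₁
  · rw [update_self, update_of_ne (by omega)]
    omega
  rcases eq_or_ne k r with rfl | h₂
  · rw [update_self, update_of_ne h₁]
    omega
  · rwa [update_of_ne h₁, update_of_ne h₂]

theorem eventually_zero_update {f : ℕ → ℕ} (hf : ∃ N, ∀ j, N ≤ j → f j = 0) (r m : ℕ) :
    ∃ N, ∀ j, N ≤ j → update f r m j = 0 := by
  obtain ⟨N, hN⟩ := hf
  exact ⟨max N (r + 1), fun j hj => by rw [update_of_ne (by omega)]; exact hN j (by omega)⟩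

theorem eq_add_sum_range_sub {G : Type*} [AddCommGroup G] (f : ℤ → G) (a : ℤ) (m : ℕ) :
    f (a + m) = f a + ∑ j ∈ range m, (f (a + j + 1) - f (a + j)) := by
  induction m with
  | zero => simp
  | succ m ih => rw [sum_range_succ, Nat.cast_succ, ← add_assoc, ← add_assoc, ← ih]; abel

section colorIndicator

variable {n : ℕ}

def colorIndicator (i : ZMod n) (k : ℤ) : ℤ := if (k : ZMod n) = i then 1 else 0

theorem colorIndicator_add_one (i : ZMod n) (k : ℤ) :
    colorIndicator i (k + 1) = colorIndicator (i - 1) k := by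
  simp only [colorIndicator, Int.cast_add, Int.cast_one, eq_sub_iff_add_eq]

theorem colorIndicator_sub_one (i : ZMod n) (k : ℤ) :
    colorIndicator i (k - 1) = colorIndicator (i + 1) k := by
  simp only [colorIndicator, Int.cast_sub, Int.cast_one, sub_eq_iff_eq_add]

end colorIndicator

namespace ChargedPartition

theorem ext {γ μ : ChargedPartition} (hc : γ.charge = μ.charge) (hp : γ.parts = μ.parts) :
    γ = μ := by
  cases γ; cases μ; cases hc; cases hp; rfl

theorem exists_parts_eq_zero (γ : ChargedPartition) : ∃ N, γ.parts N = 0 :=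
  let ⟨N, hN⟩ := γ.eventually_zero
  ⟨N, hN N le_rfl⟩

theorem parts_eq_zero_of_le (γ : ChargedPartition) {N r : ℕ} (hN : γ.parts N = 0)
    (h : N ≤ r) : γ.parts r = 0 :=
  Nat.eq_zero_of_le_zero (hN ▸ γ.antitone h)

def IsAddableRow (γ : ChargedPartition) (r : ℕ) : Prop :=
  r = 0 ∨ γ.parts r < γ.parts (r - 1)

def IsRemovableRow (γ : ChargedPartition) (r : ℕ) : Prop :=
  γ.parts (r + 1) < γ.parts r

instance (γ : ChargedPartition) : DecidablePred γ.IsAddableRow :=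
  fun _ => inferInstanceAs (Decidable (_ ∨ _))

instance (γ : ChargedPartition) : DecidablePred γ.IsRemovableRow :=
  fun _ => inferInstanceAs (Decidable (_ < _))

theorem isAddableRow_zero (γ : ChargedPartition) : γ.IsAddableRow 0 :=
  Or.inl rfl

theorem IsAddableRow.lt {γ : ChargedPartition} {N r : ℕ} (hN : γ.parts N = 0)
    (hr : γ.IsAddableRow r) : r < N + 1 := by
  by_contra! h
  rcases hr with rfl | hr
  · omega
  · rw [γ.parts_eq_zero_of_le hN (by omega : N ≤ r - 1)] at hr
    omega

theorem IsRemovableRow.pos {γ : ChargedPartition} {r : ℕ} (hr : γ.IsRemovableRow r) :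
    0 < γ.parts r :=
  (Nat.zero_le _).trans_lt hr

theorem IsRemovableRow.lt {γ : ChargedPartition} {N r : ℕ} (hN : γ.parts N = 0)
    (hr : γ.IsRemovableRow r) : r < N := by
  by_contra! h
  rw [IsRemovableRow, γ.parts_eq_zero_of_le hN h] at hr
  omega

noncomputable def addRow (γ : ChargedPartition) (r : ℕ) : ChargedPartition :=
  if h : γ.IsAddableRow r then
    ⟨γ.charge, update γ.parts r (γ.parts r + 1), antitone_update_add_one γ.antitone h,
      eventually_zero_update γ.eventually_zero _ _⟩
  else γ

noncomputable def removeRow (γ : ChargedPartition) (r : ℕ) : ChargedPartition :=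
  if h : γ.IsRemovableRow r then
    ⟨γ.charge, update γ.parts r (γ.parts r - 1), antitone_update_sub_one γ.antitone h,
      eventually_zero_update γ.eventually_zero _ _⟩
  else γ

theorem addBox_iff {γ μ : ChargedPartition} {k : ℤ} :
    AddBox γ μ k ↔
      ∃ r, γ.IsAddableRow r ∧ γ.charge + γ.parts r - r = k ∧ μ = γ.addRow r := by
  constructor
  · rintro ⟨hc, r, hp, hk⟩
    have hr : γ.IsAddableRow r := by
      refine (eq_or_ne r 0).imp_right fun h => ?_
      have := μ.antitone (Nat.sub_le r 1)
      rw [hp, update_self, update_of_ne (by omega)] at this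
      omega
    refine ⟨r, hr, hk, ?_⟩
    rw [addRow, dif_pos hr]
    exact ext hc hp
  · rintro ⟨r, hr, hk, rfl⟩
    rw [addRow, dif_pos hr]
    exact ⟨rfl, r, rfl, hk⟩

theorem removeBox_iff {γ μ : ChargedPartition} {k : ℤ} :
    RemoveBox γ μ k ↔
      ∃ r, γ.IsRemovableRow r ∧ γ.charge + γ.parts r - r - 1 = k ∧ μ = γ.removeRow r := by
  constructor
  · rintro ⟨hc, r, hp, hk⟩
    have hpr : γ.parts r = μ.parts r + 1 := by rw [hp, update_self]
    have hr : γ.IsRemovableRow r := by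
      have := μ.antitone (by omega : r ≤ r + 1)
      rw [IsRemovableRow, hp, update_self, update_of_ne (by omega)]
      omega
    refine ⟨r, hr, by omega, ?_⟩
    rw [removeRow, dif_pos hr]
    refine ext hc.symm ?_
    show μ.parts = update γ.parts r (γ.parts r - 1)
    rw [hpr, Nat.add_sub_cancel, hp, update_idem, update_eq_self]
  · rintro ⟨r, hr, hk, rfl⟩
    rw [removeRow, dif_pos hr]
    refine ⟨rfl, r, ?_, ?_⟩
    · show γ.parts = update (update γ.parts r (γ.parts r - 1)) r
        (update γ.parts r (γ.parts r - 1) r + 1)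
      rw [update_idem, update_self, Nat.sub_add_cancel hr.pos, update_eq_self]
    · have := hr.pos
      simp only [update_self]
      omega

theorem addRow_injOn (γ : ChargedPartition) : Set.InjOn γ.addRow {r | γ.IsAddableRow r} := by
  intro r (hr : γ.IsAddableRow r) r' (hr' : γ.IsAddableRow r') h
  by_contra hne
  have := congr_arg (·.parts r) h
  simp only [addRow, dif_pos hr, dif_pos hr', update_self, update_of_ne hne] at this
  omega

theorem removeRow_injOn (γ : ChargedPartition) :
    Set.InjOn γ.removeRow {r | γ.IsRemovableRow r} := by
  intro r (hr : γ.IsRemovableRow r) r' (hr' : γ.IsRemovableRow r') h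
  by_contra hne
  have := congr_arg (·.parts r) h
  simp only [removeRow, dif_pos hr, dif_pos hr', update_self, update_of_ne hne] at this
  unfold IsRemovableRow at hr
  omega

variable {n : ℕ}

theorem setOf_addBoxC_eq_image (γ : ChargedPartition) {N : ℕ} (hN : γ.parts N = 0)
    (i : ZMod n) :
    {μ | AddBoxC n γ μ i} = γ.addRow '' ↑((range (N + 1)).filter fun r =>
      γ.IsAddableRow r ∧ ((γ.charge + γ.parts r - r : ℤ) : ZMod n) = i) := by
  ext μ
  simp only [AddBoxC, addBox_iff, Set.mem_ofPred_eq, Set.mem_image, coe_filter, mem_range]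
  constructor
  · rintro ⟨_, rfl, r, hr, rfl, rfl⟩
    exact ⟨r, ⟨hr.lt hN, hr, rfl⟩, rfl⟩
  · rintro ⟨r, ⟨-, hr, rfl⟩, rfl⟩
    exact ⟨_, rfl, r, hr, rfl, rfl⟩

theorem setOf_removeBoxC_eq_image (γ : ChargedPartition) {N : ℕ} (hN : γ.parts N = 0)
    (i : ZMod n) :
    {μ | RemoveBoxC n γ μ i} = γ.removeRow '' ↑((range N).filter fun r =>
      γ.IsRemovableRow r ∧ ((γ.charge + γ.parts r - r - 1 : ℤ) : ZMod n) = i) := by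
  ext μ
  simp only [RemoveBoxC, removeBox_iff, Set.mem_ofPred_eq, Set.mem_image, coe_filter,
    mem_range]
  constructor
  · rintro ⟨_, rfl, r, hr, rfl, rfl⟩
    exact ⟨r, ⟨hr.lt hN, hr, rfl⟩, rfl⟩
  · rintro ⟨r, ⟨-, hr, rfl⟩, rfl⟩
    exact ⟨_, rfl, r, hr, rfl, rfl⟩

theorem finite_setOf_addBoxC (γ : ChargedPartition) (i : ZMod n) :
    {μ | AddBoxC n γ μ i}.Finite := by
  obtain ⟨N, hN⟩ := γ.exists_parts_eq_zero
  rw [γ.setOf_addBoxC_eq_image hN]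
  exact (finite_toSet _).image _

theorem finite_setOf_removeBoxC (γ : ChargedPartition) (i : ZMod n) :
    {μ | RemoveBoxC n γ μ i}.Finite := by
  obtain ⟨N, hN⟩ := γ.exists_parts_eq_zero
  rw [γ.setOf_removeBoxC_eq_image hN]
  exact (finite_toSet _).image _

theorem ncard_setOf_addBoxC (γ : ChargedPartition) {N : ℕ} (hN : γ.parts N = 0)
    (i : ZMod n) :
    ({μ | AddBoxC n γ μ i}.ncard : ℤ) = ∑ r ∈ range (N + 1),
      if γ.IsAddableRow r then colorIndicator i (γ.charge + γ.parts r - r) else 0 := by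
  rw [γ.setOf_addBoxC_eq_image hN,
    (γ.addRow_injOn.mono fun r hr => (mem_filter.1 hr).2.1).ncard_image, Set.ncard_coe_finset,
    card_filter]
  simp only [Nat.cast_sum, Nat.cast_ite, Nat.cast_one, Nat.cast_zero, ite_and, colorIndicator]

theorem ncard_setOf_removeBoxC (γ : ChargedPartition) {N : ℕ} (hN : γ.parts N = 0)
    (i : ZMod n) :
    ({μ | RemoveBoxC n γ μ i}.ncard : ℤ) = ∑ r ∈ range N,
      if γ.IsRemovableRow r then colorIndicator i (γ.charge + γ.parts r - r - 1) else 0 := by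
  rw [γ.setOf_removeBoxC_eq_image hN,
    (γ.removeRow_injOn.mono fun r hr => (mem_filter.1 hr).2.1).ncard_image, Set.ncard_coe_finset,
    card_filter]
  simp only [Nat.cast_sum, Nat.cast_ite, Nat.cast_one, Nat.cast_zero, ite_and, colorIndicator]

theorem boxCount_eq_sum (γ : ChargedPartition) {N : ℕ} (hN : γ.parts N = 0) (c : ZMod n) :
    (boxCount n γ c : ℤ) =
      ∑ r ∈ range N, ∑ j ∈ range (γ.parts r), colorIndicator c (γ.charge - r + j) := by
  let boxes := (range N ×ˢ range (γ.parts 0)).filter fun x => x.2 < γ.parts x.1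
  have hboxes : ∀ x, x ∈ boxes ↔ x.1 ∈ range N ∧ x.2 ∈ range (γ.parts x.1) := fun x => by
    simp only [boxes, mem_filter, mem_product, mem_range]
    constructor
    · rintro ⟨⟨h, -⟩, h'⟩
      exact ⟨h, h'⟩
    · rintro ⟨h, h'⟩
      exact ⟨⟨h, h'.trans_le (γ.antitone (Nat.zero_le _))⟩, h'⟩
  have hset : {x : ℕ × ℕ | x.2 < γ.parts x.1 ∧
      ((γ.charge + (x.2 : ℤ) - (x.1 : ℤ) : ℤ) : ZMod n) = c} =
      ↑(boxes.filter fun x => ((γ.charge + (x.2 : ℤ) - (x.1 : ℤ) : ℤ) : ZMod n) = c) := by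
    ext x
    simp only [Set.mem_ofPred_eq, coe_filter, hboxes, mem_range]
    constructor
    · rintro ⟨h, h'⟩
      refine ⟨⟨?_, h⟩, h'⟩
      by_contra! hx
      rw [γ.parts_eq_zero_of_le hN hx] at h
      omega
    · exact fun ⟨⟨_, h⟩, h'⟩ => ⟨h, h'⟩
  rw [boxCount, hset, Set.ncard_coe_finset, card_filter, Nat.cast_sum,
    sum_finset_product boxes (range N) (fun r => range (γ.parts r)) hboxes]
  simp only [Nat.cast_ite, Nat.cast_one, Nat.cast_zero, colorIndicator, sub_add_eq_add_sub]

theorem sum_addable_sub_sum_removable {G : Type*} [AddCommGroup G] (γ : ChargedPartition)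
    {N : ℕ} (hN : γ.parts N = 0) (e : ℤ → G) :
    ∑ r ∈ range (N + 1), (if γ.IsAddableRow r then e (γ.charge + γ.parts r - r) else 0) -
      ∑ r ∈ range N, (if γ.IsRemovableRow r then e (γ.charge + γ.parts r - r - 1) else 0) =
    e γ.charge + ∑ r ∈ range N, ∑ j ∈ range (γ.parts r),
      (e (γ.charge - r + j + 1) - 2 • e (γ.charge - r + j) + e (γ.charge - r + j - 1)) := by
  set c := γ.charge
  set b : ℕ → ℤ := fun r => c + γ.parts r - r
  have hpair : ∀ r : ℕ,
      (if γ.IsAddableRow (r + 1) then e (b (r + 1)) else 0) -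
        (if γ.IsRemovableRow r then e (b r - 1) else 0) = e (b (r + 1)) - e (b r - 1) := by
    intro r
    by_cases hr : γ.IsRemovableRow r
    · have ha : γ.IsAddableRow (r + 1) := Or.inr hr
      rw [if_pos ha, if_pos hr]
    · have ha : ¬ γ.IsAddableRow (r + 1) := fun h => h.elim (Nat.succ_ne_zero r) hr
      have hb : b (r + 1) = b r - 1 := by
        have : γ.parts (r + 1) = γ.parts r := le_antisymm (γ.antitone r.le_succ) (not_lt.1 hr)
        simp only [b, this]
        push_cast
        ring
      rw [if_neg ha, if_neg hr, hb, sub_self, sub_self]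
  have hrow : ∀ r : ℕ, e (b r) - e (b r - 1) = e (c - r) - e (c - r - 1) +
      ∑ j ∈ range (γ.parts r), (e (c - r + j + 1) - 2 • e (c - r + j) + e (c - r + j - 1)) := by
    intro r
    rw [show b r = c - r + γ.parts r by simp only [b]; ring,
      eq_add_sum_range_sub (fun x => e x - e (x - 1))]
    refine congr_arg _ (sum_congr rfl fun j _ => ?_)
    rw [add_sub_cancel_right, two_nsmul]
    abel
  have hfirstColumn : ∑ r ∈ range N, (e (c - r) - e (c - r - 1)) = e c - e (c - N) := by
    have := sum_range_sub' (fun r : ℕ => e (c - r)) N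
    simpa only [Nat.cast_succ, sub_add_eq_sub_sub, Nat.cast_zero, sub_zero] using this
  calc _ = ∑ r ∈ range N, (e (b (r + 1)) - e (b r - 1)) + e (b 0) := by
        rw [sum_range_succ', add_sub_right_comm, ← sum_sub_distrib,
          sum_congr rfl fun r _ => hpair r, if_pos γ.isAddableRow_zero]
    _ = ∑ r ∈ range N, (e (b r) - e (b r - 1)) + e (b N) := by
        rw [sum_sub_distrib, sum_sub_distrib, sub_add_eq_add_sub, sub_add_eq_add_sub,
          ← sum_range_succ' (fun r => e (b r)), ← sum_range_succ (fun r => e (b r))]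
    _ = _ := by
        rw [sum_congr rfl fun r _ => hrow r, sum_add_distrib, hfirstColumn,
          show b N = c - N by simp [b, hN]]
        abel

theorem ncard_addBoxC_sub_ncard_removeBoxC (γ : ChargedPartition) (i : ZMod n) :
    ({μ | AddBoxC n γ μ i}.ncard : ℤ) - {μ | RemoveBoxC n γ μ i}.ncard =
      boxCount n γ (i - 1) + boxCount n γ (i + 1) - 2 * boxCount n γ i +
        colorIndicator i γ.charge := by
  obtain ⟨N, hN⟩ := γ.exists_parts_eq_zero
  rw [γ.ncard_setOf_addBoxC hN, γ.ncard_setOf_removeBoxC hN,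
    sum_addable_sub_sum_removable γ hN, γ.boxCount_eq_sum hN, γ.boxCount_eq_sum hN,
    γ.boxCount_eq_sum hN]
  simp only [colorIndicator_add_one, colorIndicator_sub_one, nsmul_eq_mul, Nat.cast_ofNat,
    sum_add_distrib, sum_sub_distrib, mul_sum]
  ring

end ChargedPartition

theorem fock_addable_sub_removable_general (n : ℕ) (i : ZMod n) :
    (∀ γ : ChargedPartition,
        {μ : ChargedPartition | AddBoxC n γ μ i}.Finite ∧
        {μ : ChargedPartition | RemoveBoxC n γ μ i}.Finite) ∧
    (∀ γ γ' : ChargedPartition, γ.charge = γ'.charge →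
        (∀ c : ZMod n, boxCount n γ c = boxCount n γ' c) →
        (Set.ncard {μ : ChargedPartition | AddBoxC n γ μ i} : ℤ) -
          (Set.ncard {μ : ChargedPartition | RemoveBoxC n γ μ i} : ℤ) =
        (Set.ncard {μ : ChargedPartition | AddBoxC n γ' μ i} : ℤ) -
          (Set.ncard {μ : ChargedPartition | RemoveBoxC n γ' μ i} : ℤ)) := by
  refine ⟨fun γ => ⟨γ.finite_setOf_addBoxC i, γ.finite_setOf_removeBoxC i⟩,
    fun γ γ' hcharge hcount => ?_⟩
  rw [γ.ncard_addBoxC_sub_ncard_removeBoxC, γ'.ncard_addBoxC_sub_ncard_removeBoxC, hcharge,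
    hcount, hcount, hcount]

/-- for every charged partition γ and residue i mod n, the sets of
addable and removable i-colored boxes are finite, and the difference
a_i(γ) − r_i(γ) equals ⟨wt(γ), α_i⟩; equivalently, it depends only on the charge
of γ together with the numbers of boxes of γ of each color. -/
theorem fock_addable_sub_removable (n : ℕ) (hn : 2 ≤ n) (i : ZMod n) :
    (∀ γ : ChargedPartition,
        {μ : ChargedPartition | AddBoxC n γ μ i}.Finite ∧
        {μ : ChargedPartition | RemoveBoxC n γ μ i}.Finite) ∧
    (∀ γ γ' : ChargedPartition, γ.charge = γ'.charge →
        (∀ c : ZMod n, boxCount n γ c = boxCount n γ' c) →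
        (Set.ncard {μ : ChargedPartition | AddBoxC n γ μ i} : ℤ) -
          (Set.ncard {μ : ChargedPartition | RemoveBoxC n γ μ i} : ℤ) =
        (Set.ncard {μ : ChargedPartition | AddBoxC n γ' μ i} : ℤ) -
          (Set.ncard {μ : ChargedPartition | RemoveBoxC n γ' μ i} : ℤ)) :=
  fock_addable_sub_removable_general n i
end

section
/- If M is a pre-NSS datum and i ∈ ℤ, then f̃_i M defined by (f̃_i M)_γ = min over μ obtained from γ by removing i-colored boxes of ( M_μ + |γ∖μ|·c_i(M) ), with c_i(M) = M_{Λ_i} − M_{s_iΛ_i} − 1, is again a pre-NSS datum; here for each γ and each integer i the minimum is over a set of one or two elements, since a charged partition has at most one removable box of any fixed integer content. -/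
open Classical

/-- A left-black Maya diagram: black = `true`, eventually black in the positive
direction and eventually white in the negative direction. -/
structure MayaDiagram where
  beads : ℤ → Bool
  black_up : ∃ N : ℤ, ∀ k : ℤ, N ≤ k → beads k = true
  white_down : ∃ N : ℤ, ∀ k : ℤ, k ≤ N → beads k = false

/-- A right-black Maya diagram: eventually white in the positive direction and
eventually black in the negative direction. -/
structure RBMaya where
  beads : ℤ → Bool
  white_up : ∃ N : ℤ, ∀ k : ℤ, N ≤ k → beads k = false
  black_down : ∃ N : ℤ, ∀ k : ℤ, k ≤ N → beads k = true

/-- The predicate of being a left-black bead configuration. -/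
def IsLB (g : ℤ → Bool) : Prop :=
  (∃ N : ℤ, ∀ k : ℤ, N ≤ k → g k = true) ∧ (∃ N : ℤ, ∀ k : ℤ, k ≤ N → g k = false)

/-- Invert the colors of a right-black Maya diagram outside the interval [a, b]. -/
def flipOutside (τ : RBMaya) (a b : ℤ) : ℤ → Bool :=
  fun k => if a ≤ k ∧ k ≤ b then τ.beads k else !(τ.beads k)

/-- The pre-NSS condition: a ℤ-valued function M on left-black Maya diagrams such
that for every right-black Maya diagram τ, the values of M on the left-black
diagrams γ_I obtained by inverting the colors of τ outside an interval I
stabilize (to a constant Θ(M)_τ) for all sufficiently large intervals I. -/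
def PreNSS (M : MayaDiagram → ℤ) : Prop :=
  ∀ τ : RBMaya, ∃ C : ℤ, ∃ a₀ b₀ : ℤ, ∀ a b : ℤ, a ≤ a₀ → b₀ ≤ b →
    ∀ h : IsLB (flipOutside τ a b), M ⟨flipOutside τ a b, h.1, h.2⟩ = C

/-- The stabilized extension Θ(M) of a pre-NSS datum M to right-black Maya
diagrams. -/
noncomputable def Theta (M : MayaDiagram → ℤ) (τ : RBMaya) : ℤ :=
  if h : PreNSS M then Classical.choose (h τ) else 0

/-- The right-black Maya diagram Λ_i : black beads exactly in positions < i. -/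
def Lam (i : ℤ) : RBMaya where
  beads := fun k => decide (k < i)
  white_up := ⟨i, fun k hk => by simp; omega⟩
  black_down := ⟨i - 1, fun k hk => by simp; omega⟩

/-- The right-black Maya diagram s_iΛ_i, obtained from Λ_i by swapping the colors
of the two beads adjacent to position i. -/
def sLam (i : ℤ) : RBMaya where
  beads := fun k => decide (k < i - 1 ∨ k = i)
  white_up := ⟨i + 1, fun k hk => by simp; omega⟩
  black_down := ⟨i - 2, fun k hk => by simp; omega⟩

/-- `RemoveAt γ μ j` : μ is obtained from γ by removing one box labeled by the
integer j, i.e. by exchanging a black bead at position j with a white bead at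
position j + 1. -/
def RemoveAt (γ μ : MayaDiagram) (j : ℤ) : Prop :=
  γ.beads j = true ∧ γ.beads (j + 1) = false ∧
    μ.beads = Function.update (Function.update γ.beads j false) (j + 1) true

/-- The constant c_i(M) = M_{Λ_i} − M_{s_iΛ_i} − 1. -/
noncomputable def cnss (i : ℤ) (M : MayaDiagram → ℤ) : ℤ :=
  Theta M (Lam i) - Theta M (sLam i) - 1

/-- The A_∞ Kashiwara operator f̃_i on pre-NSS data:
(f̃_i M)_γ = min over μ obtained from γ by removing boxes labeled i of
( M_μ + |γ∖μ|·c_i(M) ); since at most one box labeled i can be removed, this is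
a minimum over one or two values. -/
noncomputable def ftil (i : ℤ) (M : MayaDiagram → ℤ) : MayaDiagram → ℤ :=
  fun γ =>
    if h : ∃ μ : MayaDiagram, RemoveAt γ μ i then
      min (M γ) (M h.choose + cnss i M)
    else M γ

lemma maya_ext {γ μ : MayaDiagram} (h : γ.beads = μ.beads) : γ = μ := by
  cases γ; cases μ; simp_all

lemma flip_isLB (τ : RBMaya) (a b : ℤ) : IsLB (flipOutside τ a b) := by
  obtain ⟨N, hN⟩ := τ.white_up
  obtain ⟨N', hN'⟩ := τ.black_down
  constructor
  · refine ⟨max N (b + 1), fun k hk => ?_⟩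
    unfold flipOutside
    rw [if_neg (by omega), hN k (by omega)]
    rfl
  · refine ⟨min N' (a - 1), fun k hk => ?_⟩
    unfold flipOutside
    rw [if_neg (by omega), hN' k (by omega)]
    rfl

/-- The right-black diagram obtained from τ by removing a box at position i. -/
def rbRemove (τ : RBMaya) (i : ℤ) : RBMaya where
  beads := Function.update (Function.update τ.beads i false) (i + 1) true
  white_up := by
    obtain ⟨N, hN⟩ := τ.white_up
    refine ⟨max N (i + 2), fun k hk => ?_⟩
    rw [Function.update_of_ne (by omega), Function.update_of_ne (by omega)]
    exact hN k (by omega)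
  black_down := by
    obtain ⟨N, hN⟩ := τ.black_down
    refine ⟨min N (i - 1), fun k hk => ?_⟩
    rw [Function.update_of_ne (by omega), Function.update_of_ne (by omega)]
    exact hN k (by omega)

/-- if M is a pre-NSS datum and i ∈ ℤ, then f̃_i M is again a
pre-NSS datum; moreover for each γ and i the minimum defining (f̃_i M)_γ is over
one or two elements, since a diagram has at most one removable box of a fixed
integer content. -/
theorem ftil_preNSS (M : MayaDiagram → ℤ) (hM : PreNSS M) (i : ℤ) :
    PreNSS (ftil i M) ∧
    ∀ γ μ μ' : MayaDiagram, RemoveAt γ μ i → RemoveAt γ μ' i → μ = μ' := by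
  have uniq : ∀ γ μ μ' : MayaDiagram, RemoveAt γ μ i → RemoveAt γ μ' i → μ = μ' := by
    intro γ μ μ' h h'
    exact maya_ext (h.2.2.trans h'.2.2.symm)
  refine ⟨?_, uniq⟩
  intro τ
  by_cases hrem : τ.beads i = true ∧ τ.beads (i + 1) = false
  · obtain ⟨C, a₀, b₀, hC⟩ := hM τ
    obtain ⟨C', a₀', b₀', hC'⟩ := hM (rbRemove τ i)
    refine ⟨min C (C' + cnss i M), min a₀ (min a₀' i), max b₀ (max b₀' (i + 1)),
      fun a b ha hb h => ?_⟩
    have hai : a ≤ i := by omega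
    have hib : i + 1 ≤ b := by omega
    set γ : MayaDiagram := ⟨flipOutside τ a b, h.1, h.2⟩ with hγ
    have hlb := flip_isLB (rbRemove τ i) a b
    set μ₀ : MayaDiagram := ⟨flipOutside (rbRemove τ i) a b, hlb.1, hlb.2⟩ with hμ₀
    have hbeads : μ₀.beads = Function.update (Function.update γ.beads i false) (i + 1) true := by
      funext k
      by_cases h1 : k = i + 1
      · rw [h1]
        show flipOutside (rbRemove τ i) a b (i + 1) = _
        unfold flipOutside
        rw [if_pos ⟨by omega, by omega⟩]
        simp [rbRemove, Function.update]
      · by_cases h2 : k = i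
        · rw [h2]
          show flipOutside (rbRemove τ i) a b i = _
          unfold flipOutside
          rw [if_pos ⟨by omega, by omega⟩]
          simp [rbRemove, Function.update]
        · rw [Function.update_of_ne h1, Function.update_of_ne h2]
          show flipOutside (rbRemove τ i) a b k = flipOutside τ a b k
          unfold flipOutside
          have : (rbRemove τ i).beads k = τ.beads k := by
            show Function.update (Function.update τ.beads i false) (i + 1) true k = τ.beads k
            rw [Function.update_of_ne h1, Function.update_of_ne h2]
          rw [this]
    have hRem : RemoveAt γ μ₀ i := by
      refine ⟨?_, ?_, hbeads⟩
      · show flipOutside τ a b i = true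
        unfold flipOutside
        rw [if_pos ⟨hai, by omega⟩]
        exact hrem.1
      · show flipOutside τ a b (i + 1) = false
        unfold flipOutside
        rw [if_pos ⟨by omega, hib⟩]
        exact hrem.2
    have hex : ∃ μ : MayaDiagram, RemoveAt γ μ i := ⟨μ₀, hRem⟩
    have hchoose : hex.choose = μ₀ := uniq γ _ _ hex.choose_spec hRem
    show ftil i M γ = _
    unfold ftil
    rw [dif_pos hex, hchoose]
    have e1 : M γ = C := hC a b (by omega) (by omega) h
    have e2 : M μ₀ = C' := hC' a b (by omega) (by omega) hlb
    rw [e1, e2]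
  · obtain ⟨C, a₀, b₀, hC⟩ := hM τ
    refine ⟨C, min a₀ i, max b₀ (i + 1), fun a b ha hb h => ?_⟩
    show ftil i M ⟨flipOutside τ a b, h.1, h.2⟩ = C
    unfold ftil
    rw [dif_neg]
    · exact hC a b (by omega) (by omega) h
    · rintro ⟨μ, h1, h2, -⟩
      apply hrem
      constructor
      · have h1' : flipOutside τ a b i = true := h1
        unfold flipOutside at h1'
        rwa [if_pos ⟨by omega, by omega⟩] at h1'
      · have h2' : flipOutside τ a b (i + 1) = false := h2
        unfold flipOutside at h2'
        rwa [if_pos ⟨by omega, by omega⟩] at h2'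
end

section
/- For an n-periodic pre-NSS datum M and i ∈ ℤ/nℤ, the affine operator f̂_i M = (∏_{k∈ℤ} f̃_{i+kn})(M) is well-defined and is given by the closed formula (f̂_i M)_γ = min over μ obtained from γ by removing i-colored boxes (color taken mod n) of ( M_μ + |γ∖μ|·(φ̂_i(M) − 1) ). -/
open Classical

/-- The shift operator on Maya diagrams (shift all positions by n). -/
def mayaShift (n : ℤ) (m : MayaDiagram) : MayaDiagram where
  beads := fun k => m.beads (k - n)
  black_up := by
    obtain ⟨N, hN⟩ := m.black_up
    exact ⟨N + n, fun k hk => hN _ (by omega)⟩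
  white_down := by
    obtain ⟨N, hN⟩ := m.white_down
    exact ⟨N + n, fun k hk => hN _ (by omega)⟩

/-- n-periodicity of a pre-NSS datum. -/
def PeriodicNSS (n : ℤ) (M : MayaDiagram → ℤ) : Prop :=
  ∀ γ : MayaDiagram, M (mayaShift n γ) = M γ

/-- The j-th part of the partition underlying a Maya diagram. -/
noncomputable def mayaPart (m : MayaDiagram) (j : ℕ) : ℕ :=
  Set.ncard {k : ℤ | m.beads k = true ∧
    j < Set.ncard {l : ℤ | m.beads l = false ∧ k < l}}

/-- The number of boxes of the partition underlying a Maya diagram. -/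
noncomputable def mayaSize (m : MayaDiagram) : ℕ := ∑ᶠ j : ℕ, mayaPart m j

/-- One removal of a box whose label is congruent to i mod n. -/
def RemStep (n i : ℤ) (γ μ : MayaDiagram) : Prop :=
  ∃ j : ℤ, (j - i) % n = 0 ∧ RemoveAt γ μ j

/-- Apply the operators f̃_j for j running over a list. -/
noncomputable def applyAll (l : List ℤ) (M : MayaDiagram → ℤ) : MayaDiagram → ℤ :=
  l.foldr (fun j N => ftil j N) M

/-- The entries ⟨ĥ_j, h_i⟩ of the affine Cartan matrix of ŝl_n, for integer
representatives j, i of residues mod n (for n = 2 the off-diagonal entry is −2). -/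
def acart (n j i : ℤ) : ℤ :=
  2 * (if (j - i) % n = 0 then 1 else 0) - (if (j - i - 1) % n = 0 then 1 else 0)
    - (if (j - i + 1) % n = 0 then 1 else 0)

/-- ε̂_i(M) = −M_{Λ_i} − M_{s_iΛ_i} + M_{Λ_{i−1}} + M_{Λ_{i+1}}. -/
noncomputable def epshat (i : ℤ) (M : MayaDiagram → ℤ) : ℤ :=
  -Theta M (Lam i) - Theta M (sLam i) + Theta M (Lam (i - 1)) + Theta M (Lam (i + 1))

/-- φ̂_i(M) = ⟨wt(M), h_i⟩ + ε̂_i(M), where wt(M) = Σ_j M_{Λ_j}·ĥ_j. -/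
noncomputable def phihat (n i : ℤ) (M : MayaDiagram → ℤ) : ℤ :=
  (∑ j ∈ Finset.range n.toNat, Theta M (Lam (j : ℤ)) * acart n (j : ℤ) i) + epshat i M

/-!
Boxes whose labels are congruent modulo `n ≥ 2` are never adjacent, so removing several of them
at once is well defined and the removals commute. An operator `f̃_j` does not change `Θ` at
right-black diagrams without a removable box `j`; since `Λ_a` and `s_aΛ_a` are white beyond `a`,
the operator `f̃_a` applied after the `f̃_p` with `p > a` still sees the constant `c_a(M)`, which by
periodicity is `c_i(M) = φ̂_i(M) - 1`. Unfolding the product `∏_k f̃_{i+kn}` one factor at a time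
then expresses its value at `γ` as the minimum of `M_μ + |R| c_i(M)` over sets `R` of removable
`i`-colored boxes, `μ` being `γ` with `R` removed; each removed box lowers the size by one. Only
finitely many boxes of `γ` are removable, so the product stabilizes once `[-K, K]` covers them.
-/

attribute [ext] MayaDiagram RBMaya

open Filter

def RemovableAt (g : ℤ → Bool) (j : ℤ) : Prop :=
  g j = true ∧ g (j + 1) = false

/-- A composite of single box removals as long as no two elements of `R` are adjacent. -/
def removeBoxes (R : Finset ℤ) (g : ℤ → Bool) (k : ℤ) : Bool :=
  if k ∈ R then false else if k - 1 ∈ R then true else g k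

section removeBoxes

variable {R : Finset ℤ} {g : ℤ → Bool} {j k : ℤ}

lemma removeBoxes_of_not_mem (hk : k ∉ R) (hk₁ : k - 1 ∉ R) : removeBoxes R g k = g k := by
  simp [removeBoxes, hk, hk₁]

lemma removeBoxes_empty (g : ℤ → Bool) : removeBoxes ∅ g = g := by
  funext k; simp [removeBoxes]

lemma removeBoxes_singleton (j : ℤ) (g : ℤ → Bool) :
    removeBoxes {j} g = Function.update (Function.update g j false) (j + 1) true := by
  funext k
  simp only [removeBoxes, Finset.mem_singleton, Function.update_apply]
  split_ifs <;> grind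

lemma removeBoxes_eventuallyEq (R : Finset ℤ) (g : ℤ → Bool) :
    removeBoxes R g =ᶠ[cofinite] g :=
  (R.eventually_cofinite_notMem.and
      (sub_left_injective.tendsto_cofinite.eventually R.eventually_cofinite_notMem)).mono
    fun _ ⟨hk, hk₁⟩ => removeBoxes_of_not_mem hk hk₁

lemma removeBoxes_insert (hj₁ : j - 1 ∉ R) :
    removeBoxes (insert j R) g = removeBoxes R (removeBoxes {j} g) := by
  funext k
  simp only [removeBoxes, Finset.mem_insert, Finset.mem_singleton]
  split_ifs <;> grind

lemma removeBoxes_insert' (hj₁ : j + 1 ∉ R) :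
    removeBoxes (insert j R) g = removeBoxes {j} (removeBoxes R g) := by
  funext k
  simp only [removeBoxes, Finset.mem_insert, Finset.mem_singleton]
  split_ifs <;> grind

lemma RemovableAt.removeBoxes (hj : RemovableAt g j) (hjR : j ∉ R)
    (hR : ∀ r ∈ R, RemovableAt g r) : RemovableAt (removeBoxes R g) j := by
  have hj₁ : j - 1 ∉ R := fun h => by simpa [hj.1] using (hR _ h).2
  have hj₂ : j + 1 ∉ R := fun h => by simpa [hj.2] using (hR _ h).1
  exact ⟨(removeBoxes_of_not_mem hjR hj₁).trans hj.1,
    (removeBoxes_of_not_mem hj₂ (by simpa using hjR)).trans hj.2⟩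

end removeBoxes

lemma eventually_atBot_prod_atTop_iff {p : ℤ × ℤ → Prop} :
    (∀ᶠ x in atBot ×ˢ atTop, p x) ↔ ∃ a₀ b₀ : ℤ, ∀ a b, a ≤ a₀ → b₀ ≤ b → p (a, b) := by
  simp [(atBot_basis.prod atTop_basis).eventually_iff, Prod.forall]

def MayaDiagram.removeBoxes (R : Finset ℤ) (γ : MayaDiagram) : MayaDiagram where
  beads := _root_.removeBoxes R γ.beads
  black_up := eventually_atTop.1 <|
    ((removeBoxes_eventuallyEq R _).filter_mono atTop_le_cofinite).trans
      (eventually_atTop.2 γ.black_up)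
  white_down := eventually_atBot.1 <|
    ((removeBoxes_eventuallyEq R _).filter_mono atBot_le_cofinite).trans
      (eventually_atBot.2 γ.white_down)

def RBMaya.removeBoxes (R : Finset ℤ) (τ : RBMaya) : RBMaya where
  beads := _root_.removeBoxes R τ.beads
  white_up := eventually_atTop.1 <|
    ((removeBoxes_eventuallyEq R _).filter_mono atTop_le_cofinite).trans
      (eventually_atTop.2 τ.white_up)
  black_down := eventually_atBot.1 <|
    ((removeBoxes_eventuallyEq R _).filter_mono atBot_le_cofinite).trans
      (eventually_atBot.2 τ.black_down)

/-- The diagram `γ_[a, b]` of the pre-NSS condition. -/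
def RBMaya.toMaya (τ : RBMaya) (a b : ℤ) : MayaDiagram where
  beads := flipOutside τ a b
  black_up := eventually_atTop.1 <|
    ((eventually_gt_atTop b).and (eventually_atTop.2 τ.white_up)).mono
      fun k ⟨hb, hk⟩ => by simp [flipOutside, hk, hb.not_ge]
  white_down := eventually_atBot.1 <|
    ((eventually_lt_atBot a).and (eventually_atBot.2 τ.black_down)).mono
      fun k ⟨ha, hk⟩ => by simp [flipOutside, hk, ha.not_ge]

lemma preNSS_of_eventually {M : MayaDiagram → ℤ}
    (h : ∀ τ : RBMaya, ∃ C, ∀ᶠ x in atBot ×ˢ atTop, M (τ.toMaya x.1 x.2) = C) : PreNSS M := by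
  intro τ
  obtain ⟨C, hC⟩ := h τ
  obtain ⟨a₀, b₀, hC⟩ := eventually_atBot_prod_atTop_iff.1 hC
  exact ⟨C, a₀, b₀, fun a b ha hb _ => hC a b ha hb⟩

namespace PreNSS

variable {M : MayaDiagram → ℤ} (hM : PreNSS M) (τ : RBMaya)
include hM

lemma eventually_eq_theta : ∀ᶠ x in atBot ×ˢ atTop, M (τ.toMaya x.1 x.2) = Theta M τ := by
  obtain ⟨a₀, b₀, h⟩ := Classical.choose_spec (hM τ)
  rw [Theta, dif_pos hM, eventually_atBot_prod_atTop_iff]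
  exact ⟨a₀, b₀, fun a b ha hb =>
    h a b ha hb ⟨(τ.toMaya a b).black_up, (τ.toMaya a b).white_down⟩⟩

lemma theta_eq {C : ℤ} (h : ∀ᶠ x in atBot ×ˢ atTop, M (τ.toMaya x.1 x.2) = C) :
    Theta M τ = C :=
  let ⟨_, hθ, hC⟩ := ((hM.eventually_eq_theta τ).and h).exists
  hθ.symm.trans hC

end PreNSS

section ftil

variable {N : MayaDiagram → ℤ} {γ μ : MayaDiagram} {j : ℤ}

lemma RemoveAt.eq_removeBoxes (h : RemoveAt γ μ j) : μ = γ.removeBoxes {j} :=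
  MayaDiagram.ext (h.2.2.trans (removeBoxes_singleton j _).symm)

lemma removeAt_removeBoxes (h : RemovableAt γ.beads j) : RemoveAt γ (γ.removeBoxes {j}) j :=
  ⟨h.1, h.2, removeBoxes_singleton j _⟩

lemma ftil_of_removableAt (h : RemovableAt γ.beads j) :
    ftil j N γ = min (N γ) (N (γ.removeBoxes {j}) + cnss j N) := by
  have hμ : ∃ μ, RemoveAt γ μ j := ⟨_, removeAt_removeBoxes h⟩
  rw [ftil, dif_pos hμ, hμ.choose_spec.eq_removeBoxes]

lemma ftil_of_not_removableAt (h : ¬RemovableAt γ.beads j) : ftil j N γ = N γ :=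
  dif_neg fun ⟨_, hμ⟩ => h ⟨hμ.1, hμ.2.1⟩

end ftil

namespace RBMaya

variable (τ : RBMaya) (j : ℤ)

lemma toMaya_beads_of_mem {a b k : ℤ} (ha : a ≤ k) (hb : k ≤ b) :
    (τ.toMaya a b).beads k = τ.beads k :=
  if_pos ⟨ha, hb⟩

lemma eventually_toMaya_removeBoxes :
    ∀ᶠ x in atBot ×ˢ atTop, (RemovableAt (τ.toMaya x.1 x.2).beads j ↔ RemovableAt τ.beads j) ∧
      (τ.toMaya x.1 x.2).removeBoxes {j} = (τ.removeBoxes {j}).toMaya x.1 x.2 := by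
  refine ((eventually_le_atBot j).prod_mk (eventually_ge_atTop (j + 1))).mono ?_
  rintro ⟨a, b⟩ ⟨ha, hb⟩
  refine ⟨by rw [RemovableAt, RemovableAt, toMaya_beads_of_mem τ ha (by omega),
    toMaya_beads_of_mem τ (by omega) hb], MayaDiagram.ext ?_⟩
  funext k
  simp only [MayaDiagram.removeBoxes, toMaya, RBMaya.removeBoxes, _root_.removeBoxes,
    flipOutside, Finset.mem_singleton]
  split_ifs <;> first | rfl | omega

end RBMaya

namespace PreNSS

variable {N : MayaDiagram → ℤ} (hN : PreNSS N) (j : ℤ)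
include hN

lemma eventually_ftil_toMaya (τ : RBMaya) :
    ∀ᶠ x in atBot ×ˢ atTop, ftil j N (τ.toMaya x.1 x.2) =
      if RemovableAt τ.beads j then min (Theta N τ) (Theta N (τ.removeBoxes {j}) + cnss j N)
      else Theta N τ := by
  filter_upwards [τ.eventually_toMaya_removeBoxes j, hN.eventually_eq_theta τ,
    hN.eventually_eq_theta (τ.removeBoxes {j})] with x ⟨hrem, hμ⟩ hθ hθ'
  split_ifs with h
  · rw [ftil_of_removableAt (hrem.2 h), hμ, hθ, hθ']
  · rw [ftil_of_not_removableAt (mt hrem.1 h), hθ]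

protected lemma ftil : PreNSS (ftil j N) :=
  preNSS_of_eventually fun τ => ⟨_, hN.eventually_ftil_toMaya j τ⟩

lemma theta_ftil_of_not_removableAt {τ : RBMaya} (h : ¬RemovableAt τ.beads j) :
    Theta (ftil j N) τ = Theta N τ :=
  (hN.ftil j).theta_eq τ ((hN.eventually_ftil_toMaya j τ).mono fun _ hx => hx.trans (if_neg h))

end PreNSS

lemma mayaShift_add (a b : ℤ) (γ : MayaDiagram) :
    mayaShift (a + b) γ = mayaShift a (mayaShift b γ) :=
  MayaDiagram.ext <| funext fun k => congrArg γ.beads (by ring)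

lemma mayaShift_zero (γ : MayaDiagram) : mayaShift 0 γ = γ :=
  MayaDiagram.ext <| funext fun k => congrArg γ.beads (sub_zero k)

namespace PeriodicNSS

variable {n : ℤ} {M : MayaDiagram → ℤ}

lemma mul_left (hper : PeriodicNSS n M) (k : ℤ) : PeriodicNSS (k * n) M := by
  induction k using Int.induction_on with
  | zero => simp [PeriodicNSS, mayaShift_zero]
  | succ k ih => intro γ; rw [add_one_mul, mayaShift_add, ih, hper]
  | pred k ih =>
    intro γ
    rw [← ih γ, ← hper, ← mayaShift_add]
    ring_nf

lemma of_dvd (hper : PeriodicNSS n M) {d : ℤ} (hd : n ∣ d) : PeriodicNSS d M := by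
  obtain ⟨k, rfl⟩ := hd
  simpa [mul_comm] using hper.mul_left k

end PeriodicNSS

def RBMaya.shift (d : ℤ) (τ : RBMaya) : RBMaya where
  beads k := τ.beads (k - d)
  white_up := eventually_atTop.1 <|
    (tendsto_atTop_add_const_right _ (-d) tendsto_id).eventually (eventually_atTop.2 τ.white_up)
  black_down := eventually_atBot.1 <|
    (tendsto_atBot_add_const_right _ (-d) tendsto_id).eventually (eventually_atBot.2 τ.black_down)

lemma RBMaya.toMaya_shift (d : ℤ) (τ : RBMaya) (a b : ℤ) :
    (τ.shift d).toMaya a b = mayaShift d (τ.toMaya (a - d) (b - d)) :=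
  MayaDiagram.ext <| funext fun k => by
    simp only [RBMaya.toMaya, mayaShift, flipOutside, RBMaya.shift]
    congr 1
    exact propext (by omega)

lemma PreNSS.theta_shift {M : MayaDiagram → ℤ} (hM : PreNSS M) {d : ℤ}
    (hper : PeriodicNSS d M) (τ : RBMaya) : Theta M (τ.shift d) = Theta M τ := by
  refine hM.theta_eq _ ?_
  obtain ⟨a₀, b₀, h⟩ := eventually_atBot_prod_atTop_iff.1 (hM.eventually_eq_theta τ)
  exact eventually_atBot_prod_atTop_iff.2 ⟨a₀ + d, b₀ + d, fun a b ha hb => by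
    rw [RBMaya.toMaya_shift, hper, h _ _ (by omega) (by omega)]⟩

lemma lam_eq_shift (a b : ℤ) : Lam a = (Lam b).shift (a - b) :=
  RBMaya.ext <| funext fun k => by
    simp only [Lam, RBMaya.shift]
    congr 1
    exact propext (by omega)

lemma sLam_eq_shift (a b : ℤ) : sLam a = (sLam b).shift (a - b) :=
  RBMaya.ext <| funext fun k => by
    simp only [sLam, RBMaya.shift]
    congr 1
    exact propext (by omega)

section periodic

variable {n : ℤ} {M : MayaDiagram → ℤ} (hM : PreNSS M) (hper : PeriodicNSS n M)
include hM hper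

lemma theta_lam_eq_of_dvd {a b : ℤ} (h : n ∣ a - b) : Theta M (Lam a) = Theta M (Lam b) := by
  rw [lam_eq_shift a b, hM.theta_shift (hper.of_dvd h)]

lemma cnss_eq_of_dvd {a b : ℤ} (h : n ∣ a - b) : cnss a M = cnss b M := by
  rw [cnss, cnss, theta_lam_eq_of_dvd hM hper h, sLam_eq_shift a b,
    hM.theta_shift (hper.of_dvd h)]

end periodic

lemma sum_range_mul_ite_emod {n : ℤ} (hn : 0 < n) {f : ℤ → ℤ}
    (hf : ∀ a b, n ∣ a - b → f a = f b) (t : ℤ) :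
    ∑ j ∈ Finset.range n.toNat, f j * (if ((j : ℤ) - t) % n = 0 then 1 else 0) = f t := by
  have ht : ((t % n).toNat : ℤ) = t % n := Int.toNat_of_nonneg (Int.emod_nonneg t hn.ne')
  have hdvd : n ∣ ((t % n).toNat : ℤ) - t := by
    rw [ht, Int.emod_def]
    exact ⟨-(t / n), by ring⟩
  rw [Finset.sum_eq_single (t % n).toNat]
  · rw [if_pos (Int.dvd_iff_emod_eq_zero.1 hdvd), mul_one, hf _ _ hdvd]
  · intro j hj hjt
    have hj : (j : ℤ) % n = j := Int.emod_eq_of_lt (by omega) (by simp at hj; omega)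
    have : (j : ℤ) % n ≠ t % n := by omega
    rw [if_neg (mt Int.emod_eq_emod_iff_emod_sub_eq_zero.2 this), mul_zero]
  · simp only [Finset.mem_range, not_lt]
    have := Int.emod_lt_of_pos t hn
    omega

lemma cnss_eq_phihat_sub_one {n : ℤ} (hn : 0 < n) {M : MayaDiagram → ℤ} (hM : PreNSS M)
    (hper : PeriodicNSS n M) (i : ℤ) : cnss i M = phihat n i M - 1 := by
  have pick := sum_range_mul_ite_emod hn fun a b h => theta_lam_eq_of_dvd hM hper h
  have hacart : ∀ j : ℤ, acart n j i = 2 * (if (j - i) % n = 0 then 1 else 0)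
      - (if (j - (i + 1)) % n = 0 then 1 else 0) - (if (j - (i - 1)) % n = 0 then 1 else 0) := by
    intro j
    rw [acart, show j - i - 1 = j - (i + 1) by ring, show j - i + 1 = j - (i - 1) by ring]
  simp only [phihat, hacart, mul_sub, Finset.sum_sub_distrib, mul_left_comm _ (2 : ℤ),
    ← Finset.mul_sum, pick, epshat, cnss]
  ring

namespace MayaDiagram

def whiteAbove (m : MayaDiagram) (k : ℤ) : Set ℤ := {l | m.beads l = false ∧ k < l}

def partSet (m : MayaDiagram) (t : ℕ) : Set ℤ :=
  {k | m.beads k = true ∧ t < (m.whiteAbove k).ncard}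

lemma mayaPart_eq_ncard (m : MayaDiagram) (t : ℕ) : mayaPart m t = (m.partSet t).ncard := rfl

lemma exists_bounds (m : MayaDiagram) :
    ∃ N₀ N₁ : ℤ, (∀ k, m.beads k = true → N₀ < k) ∧ ∀ l, m.beads l = false → l < N₁ := by
  obtain ⟨N₁, h₁⟩ := m.black_up
  obtain ⟨N₀, h₀⟩ := m.white_down
  refine ⟨N₀, N₁, fun k hk => ?_, fun l hl => ?_⟩ <;> by_contra! hc
  · simp [h₀ k hc] at hk
  · simp [h₁ l hc] at hl

lemma whiteAbove_finite (m : MayaDiagram) (k : ℤ) : (m.whiteAbove k).Finite := by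
  obtain ⟨_, N₁, -, h₁⟩ := m.exists_bounds
  exact (Set.finite_Ioo k N₁).subset fun l hl => ⟨hl.2, h₁ l hl.1⟩

lemma partSet_finite (m : MayaDiagram) (t : ℕ) : (m.partSet t).Finite := by
  obtain ⟨N₀, N₁, h₀, h₁⟩ := m.exists_bounds
  refine (Set.finite_Ioo N₀ N₁).subset fun k hk => ⟨h₀ k hk.1, ?_⟩
  obtain ⟨l, hl, hkl⟩ := Set.nonempty_of_ncard_ne_zero (s := m.whiteAbove k)
    (Nat.zero_lt_of_lt hk.2).ne'
  exact hkl.trans (h₁ l hl)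

lemma mayaPart_support_finite (m : MayaDiagram) : (Function.support (mayaPart m)).Finite := by
  obtain ⟨N₀, N₁, h₀, h₁⟩ := m.exists_bounds
  refine (Set.finite_Iio (Set.Ioo N₀ N₁).ncard).subset fun t ht => ?_
  obtain ⟨k, hk, ht⟩ := Set.nonempty_of_ncard_ne_zero ht
  have hsub : m.whiteAbove k ⊆ Set.Ioo N₀ N₁ := fun l hl => ⟨(h₀ k hk).trans hl.2, h₁ l hl.1⟩
  exact ht.trans_le (Set.ncard_le_ncard hsub (Set.finite_Ioo N₀ N₁))

lemma ncard_whiteAbove_of_white {m : MayaDiagram} {j : ℤ} (hw : m.beads (j + 1) = false) :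
    (m.whiteAbove j).ncard = (m.whiteAbove (j + 1)).ncard + 1 := by
  have : m.whiteAbove j = insert (j + 1) (m.whiteAbove (j + 1)) := by
    ext l
    simp only [whiteAbove, Set.mem_insert_iff, Set.mem_ofPred_eq]
    constructor
    · rintro ⟨hl, hjl⟩
      exact (eq_or_ne l (j + 1)).imp_right fun h => ⟨hl, by omega⟩
    · rintro (rfl | ⟨hl, hjl⟩)
      exacts [⟨hw, by omega⟩, ⟨hl, by omega⟩]
  rw [this, Set.ncard_insert_of_notMem (fun h => (lt_irrefl _ h.2)) (m.whiteAbove_finite _)]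

end MayaDiagram

namespace RemoveAt

open MayaDiagram

variable {γ μ : MayaDiagram} {j : ℤ} (h : RemoveAt γ μ j)
include h

lemma beads_eq_comp_swap : μ.beads = γ.beads ∘ Equiv.swap j (j + 1) := by
  obtain ⟨hj, hj₁, hμ⟩ := h
  funext k
  rw [hμ, Function.comp_apply, Equiv.swap_apply_def]
  simp only [Function.update_apply]
  split_ifs <;> subst_vars <;> first | omega | exact hj.symm | exact hj₁.symm | rfl

lemma ncard_whiteAbove (k : ℤ) (hk : k ≠ j) :
    (μ.whiteAbove k).ncard = (γ.whiteAbove k).ncard := by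
  have : μ.whiteAbove k = Equiv.swap j (j + 1) ⁻¹' γ.whiteAbove k := by
    ext l
    simp only [whiteAbove, h.beads_eq_comp_swap, Set.mem_preimage, Set.mem_ofPred_eq,
      Function.comp_apply]
    rw [Equiv.swap_apply_def]
    split_ifs <;> constructor <;> rintro ⟨h₁, h₂⟩ <;> exact ⟨h₁, by omega⟩
  rw [this, Set.ncard_preimage_of_injective_subset_range (Equiv.injective _) (by simp)]

lemma mem_partSet_swap_iff {t : ℕ} {k : ℤ} (hk : k ≠ j) :
    k ∈ Equiv.swap j (j + 1) ⁻¹' μ.partSet t ↔ k ∈ γ.partSet t := by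
  rcases eq_or_ne k (j + 1) with rfl | hk₁
  · simp [partSet, h.beads_eq_comp_swap, h.2.1]
  simp only [partSet, Set.mem_preimage, Set.mem_ofPred_eq, h.beads_eq_comp_swap,
    Function.comp_apply, Equiv.swap_apply_of_ne_of_ne hk hk₁,
    h.ncard_whiteAbove k hk]

lemma mem_partSet_swap_self {t : ℕ} :
    j ∈ Equiv.swap j (j + 1) ⁻¹' μ.partSet t ↔ t + 1 < (γ.whiteAbove j).ncard := by
  simp only [partSet, Set.mem_preimage, Set.mem_ofPred_eq, Equiv.swap_apply_left,
    h.ncard_whiteAbove (j + 1) (by omega), ncard_whiteAbove_of_white h.2.1]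
  rw [h.2.2]
  simp

/- Under the swap `j ↔ j + 1` only the black bead at `j` changes its number of white beads to
the right, and only by one. -/
lemma mayaPart_eq (t : ℕ) :
    mayaPart γ t = mayaPart μ t + if t + 1 = (γ.whiteAbove j).ncard then 1 else 0 := by
  have hpre : (Equiv.swap j (j + 1) ⁻¹' μ.partSet t).ncard = mayaPart μ t :=
    Set.ncard_preimage_of_injective_subset_range (Equiv.injective _) (by simp)
  have hj : j ∈ γ.partSet t ↔ t < (γ.whiteAbove j).ncard := by simp [partSet, h.1]
  rw [mayaPart_eq_ncard, ← hpre]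
  split_ifs with ht
  · have : γ.partSet t = insert j (Equiv.swap j (j + 1) ⁻¹' μ.partSet t) := by
      ext k
      rcases eq_or_ne k j with rfl | hk
      · simp only [Set.mem_insert_iff, true_or, iff_true, hj]; omega
      · rw [Set.mem_insert_iff, h.mem_partSet_swap_iff hk]; simp [hk]
    rw [this, Set.ncard_insert_of_notMem (by rw [h.mem_partSet_swap_self]; omega)
      ((μ.partSet_finite t).preimage (Equiv.injective _).injOn)]
  · congr 1
    ext k
    rcases eq_or_ne k j with rfl | hk
    · rw [hj, h.mem_partSet_swap_self]; omega
    · exact (h.mem_partSet_swap_iff hk).symm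

lemma mayaSize_eq : mayaSize γ = mayaSize μ + 1 := by
  set w := (γ.whiteAbove j).ncard
  have hw : w = (γ.whiteAbove (j + 1)).ncard + 1 := ncard_whiteAbove_of_white h.2.1
  have hsupp : (Function.support fun t : ℕ => if t + 1 = w then 1 else 0).Finite :=
    (Set.finite_singleton (w - 1)).subset fun t ht => by
      simp only [Function.mem_support, ne_eq, ite_eq_right_iff, Classical.not_imp] at ht
      simp only [Set.mem_singleton_iff]
      omega
  rw [mayaSize, mayaSize, finsum_congr h.mayaPart_eq,
    finsum_add_distrib μ.mayaPart_support_finite hsupp,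
    finsum_eq_single _ (w - 1) fun t ht => if_neg (by omega), if_pos (by omega)]

end RemoveAt

namespace MayaDiagram

variable {γ : MayaDiagram} {R : Finset ℤ} {a : ℤ}

lemma removeBoxes_empty (γ : MayaDiagram) : γ.removeBoxes ∅ = γ :=
  MayaDiagram.ext (_root_.removeBoxes_empty γ.beads)

lemma removeAt_removeBoxes_insert (ha : RemovableAt γ.beads a) (haR : a ∉ R)
    (hR : ∀ r ∈ R, RemovableAt γ.beads r) :
    RemoveAt (γ.removeBoxes R) (γ.removeBoxes (insert a R)) a := by
  have ha₁ : a + 1 ∉ R := fun h => by simpa [ha.2] using (hR _ h).1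
  rw [show γ.removeBoxes (insert a R) = (γ.removeBoxes R).removeBoxes {a} from
    MayaDiagram.ext (removeBoxes_insert' ha₁)]
  exact removeAt_removeBoxes (ha.removeBoxes haR hR)

lemma mayaSize_removeBoxes (hR : ∀ r ∈ R, RemovableAt γ.beads r) :
    mayaSize γ = mayaSize (γ.removeBoxes R) + R.card := by
  induction R using Finset.induction_on with
  | empty => simp [removeBoxes_empty]
  | insert a R haR ih =>
    have hR' : ∀ r ∈ R, RemovableAt γ.beads r := fun r hr => hR r (Finset.mem_insert_of_mem hr)
    have ha := hR a (Finset.mem_insert_self a R)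
    rw [ih hR', (removeAt_removeBoxes_insert ha haR hR').mayaSize_eq,
      Finset.card_insert_of_notMem haR]
    ring

end MayaDiagram

lemma emod_ne_zero_of_adjacent {n i j r : ℤ} (hn : 2 ≤ n) (hj : (j - i) % n = 0)
    (hr : r = j + 1 ∨ r = j - 1) : (r - i) % n ≠ 0 := by
  intro hr'
  have hdvd : n ∣ r - j := by
    simpa using Int.dvd_sub (Int.dvd_of_emod_eq_zero hr') (Int.dvd_of_emod_eq_zero hj)
  rcases hr with rfl | rfl
  · have := Int.le_of_dvd one_pos (by simpa using hdvd); omega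
  · have := Int.le_of_dvd one_pos (by simpa using hdvd); omega

section reachability

variable {n i : ℤ} {γ μ : MayaDiagram}

lemma reflTransGen_remStep_removeBoxes {R : Finset ℤ}
    (hR : ∀ r ∈ R, (r - i) % n = 0 ∧ RemovableAt γ.beads r) :
    Relation.ReflTransGen (RemStep n i) γ (γ.removeBoxes R) := by
  induction R using Finset.induction_on with
  | empty => rw [MayaDiagram.removeBoxes_empty]
  | insert a R haR ih =>
    have hR' : ∀ r ∈ R, (r - i) % n = 0 ∧ RemovableAt γ.beads r :=
      fun r hr => hR r (Finset.mem_insert_of_mem hr)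
    obtain ⟨ha, ha'⟩ := hR a (Finset.mem_insert_self a R)
    exact (ih hR').tail
      ⟨a, ha, MayaDiagram.removeAt_removeBoxes_insert ha' haR fun r hr => (hR' r hr).2⟩

lemma exists_removeBoxes_of_reflTransGen (hn : 2 ≤ n)
    (h : Relation.ReflTransGen (RemStep n i) γ μ) :
    ∃ R : Finset ℤ, (∀ r ∈ R, (r - i) % n = 0 ∧ RemovableAt γ.beads r) ∧
      μ = γ.removeBoxes R := by
  induction h with
  | refl => exact ⟨∅, by simp, (MayaDiagram.removeBoxes_empty γ).symm⟩
  | tail _ hstep ih =>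
    obtain ⟨R, hR, rfl⟩ := ih
    obtain ⟨j, hj, hrem⟩ := hstep
    have hjR : j ∉ R := fun h => by
      simpa [MayaDiagram.removeBoxes, _root_.removeBoxes, h] using hrem.1
    have hj₁ : j + 1 ∉ R := fun h => emod_ne_zero_of_adjacent hn hj (.inl rfl) (hR _ h).1
    have hj₂ : j - 1 ∉ R := fun h => emod_ne_zero_of_adjacent hn hj (.inr rfl) (hR _ h).1
    have hjγ : RemovableAt γ.beads j :=
      ⟨(removeBoxes_of_not_mem hjR hj₂).symm.trans hrem.1,
        (removeBoxes_of_not_mem hj₁ (by simpa using hjR)).symm.trans hrem.2.1⟩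
    refine ⟨insert j R, fun r hr => ?_, ?_⟩
    · rcases Finset.mem_insert.1 hr with rfl | hr
      exacts [⟨hj, hjγ⟩, hR r hr]
    · rw [hrem.eq_removeBoxes]
      exact MayaDiagram.ext (removeBoxes_insert' hj₁).symm

end reachability

lemma removableAt_removeBoxes_singleton_iff {g : ℤ → Bool} {a r : ℤ}
    (hr : a + 1 < r ∨ r + 1 < a) : RemovableAt (removeBoxes {a} g) r ↔ RemovableAt g r := by
  rw [RemovableAt, RemovableAt, removeBoxes_of_not_mem (by simp; omega) (by simp; omega),
    removeBoxes_of_not_mem (by simp; omega) (by simp; omega)]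

def removalValues (M : MayaDiagram → ℤ) (c : ℤ) (s : Set ℤ) (γ : MayaDiagram) : Set ℤ :=
  {v | ∃ R : Finset ℤ, (∀ r ∈ R, r ∈ s ∧ RemovableAt γ.beads r) ∧
    v = M (γ.removeBoxes R) + R.card * c}

section removalValues

variable {M : MayaDiagram → ℤ} {c : ℤ} {s t : Set ℤ} {γ : MayaDiagram} {a : ℤ}

lemma removalValues_congr (h : ∀ r, RemovableAt γ.beads r → (r ∈ s ↔ r ∈ t)) :
    removalValues M c s γ = removalValues M c t γ := by
  ext v
  exact exists_congr fun R => and_congr_left' <| forall₂_congr fun r _ =>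
    ⟨fun hr => ⟨(h r hr.2).1 hr.1, hr.2⟩, fun hr => ⟨(h r hr.2).2 hr.1, hr.2⟩⟩

lemma removalValues_empty : removalValues M c ∅ γ = {M γ} := by
  ext v
  simp only [removalValues, Set.mem_empty_iff_false, false_and, Set.mem_singleton_iff]
  constructor
  · rintro ⟨R, hR, rfl⟩
    rw [Finset.eq_empty_of_forall_notMem fun r hr => hR r hr, MayaDiagram.removeBoxes_empty]
    simp
  · rintro rfl
    exact ⟨∅, by simp, by simp [MayaDiagram.removeBoxes_empty]⟩

lemma removalValues_insert_of_not_removableAt (ha : ¬RemovableAt γ.beads a) :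
    removalValues M c (insert a s) γ = removalValues M c s γ :=
  removalValues_congr fun r hr => by
    rw [Set.mem_insert_iff, or_iff_right]
    rintro rfl
    exact ha hr

lemma removalValues_insert_of_removableAt (ha : RemovableAt γ.beads a)
    (hs : ∀ p ∈ s, a + 1 < p ∨ p + 1 < a) :
    removalValues M c (insert a s) γ =
      removalValues M c s γ ∪ (· + c) '' removalValues M c s (γ.removeBoxes {a}) := by
  have has : a ∉ s := fun h => by have := hs a h; omega
  have hrem : ∀ r ∈ s, RemovableAt (γ.removeBoxes {a}).beads r ↔ RemovableAt γ.beads r :=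
    fun r hr => removableAt_removeBoxes_singleton_iff (hs r hr)
  ext v
  simp only [removalValues, Set.mem_union, Set.mem_image, Set.mem_ofPred_eq, Set.mem_insert_iff]
  constructor
  · rintro ⟨R, hR, rfl⟩
    by_cases haR : a ∈ R
    · have hR' : ∀ r ∈ R.erase a, r ∈ s ∧ RemovableAt γ.beads r := fun r hr =>
        ⟨(hR r (Finset.mem_of_mem_erase hr)).1.resolve_left (Finset.ne_of_mem_erase hr),
          (hR r (Finset.mem_of_mem_erase hr)).2⟩
      have ha₁ : a - 1 ∉ R.erase a := fun h => by have := hs _ (hR' _ h).1; omega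
      refine .inr ⟨_, ⟨R.erase a, fun r hr =>
        ⟨(hR' r hr).1, (hrem r (hR' r hr).1).2 (hR' r hr).2⟩, rfl⟩, ?_⟩
      have hsplit : γ.removeBoxes R = (γ.removeBoxes {a}).removeBoxes (R.erase a) := by
        conv_lhs => rw [← Finset.insert_erase haR]
        exact MayaDiagram.ext (removeBoxes_insert ha₁)
      rw [hsplit, ← Finset.card_erase_add_one haR]
      push_cast
      ring
    · exact .inl ⟨R, fun r hr => ⟨(hR r hr).1.resolve_left (ne_of_mem_of_not_mem hr haR),
        (hR r hr).2⟩, rfl⟩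
  · rintro (⟨R, hR, rfl⟩ | ⟨_, ⟨R, hR, rfl⟩, rfl⟩)
    · exact ⟨R, fun r hr => ⟨.inr (hR r hr).1, (hR r hr).2⟩, rfl⟩
    · have haR : a ∉ R := fun h => has (hR a h).1
      have ha₁ : a - 1 ∉ R := fun h => by have := hs _ (hR _ h).1; omega
      refine ⟨insert a R, fun r hr => ?_, ?_⟩
      · rcases Finset.mem_insert.1 hr with rfl | hr
        exacts [⟨.inl rfl, ha⟩, ⟨.inr (hR r hr).1, (hrem r (hR r hr).1).1 (hR r hr).2⟩]
      · rw [Finset.card_insert_of_notMem haR, show γ.removeBoxes (insert a R) =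
          (γ.removeBoxes {a}).removeBoxes R from MayaDiagram.ext (removeBoxes_insert ha₁)]
        push_cast
        ring

end removalValues

lemma applyAll_cons (a : ℤ) (l : List ℤ) (M : MayaDiagram → ℤ) :
    applyAll (a :: l) M = ftil a (applyAll l M) :=
  rfl

namespace PreNSS

variable {M : MayaDiagram → ℤ} (hM : PreNSS M)
include hM

protected lemma applyAll (l : List ℤ) : PreNSS (applyAll l M) := by
  induction l with
  | nil => exact hM
  | cons a l ih => exact ih.ftil a

lemma theta_applyAll {τ : RBMaya} {l : List ℤ} (h : ∀ p ∈ l, ¬RemovableAt τ.beads p) :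
    Theta (applyAll l M) τ = Theta M τ := by
  induction l with
  | nil => rfl
  | cons a l ih =>
    rw [applyAll_cons, (hM.applyAll l).theta_ftil_of_not_removableAt a (h a (by simp))]
    exact ih fun p hp => h p (List.mem_cons_of_mem a hp)

lemma cnss_applyAll {a : ℤ} {l : List ℤ} (h : ∀ p ∈ l, a < p) :
    cnss a (applyAll l M) = cnss a M := by
  rw [cnss, cnss, hM.theta_applyAll fun p hp hrem => ?_, hM.theta_applyAll fun p hp hrem => ?_]
  · have : p < a - 1 ∨ p = a := by simpa [sLam] using hrem.1
    have := h p hp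
    omega
  · have : p < a := by simpa [Lam] using hrem.1
    have := h p hp
    omega

lemma isLeast_applyAll {c : ℤ} {l : List ℤ} (hl : l.Pairwise fun a b => a + 1 < b)
    (hc : ∀ p ∈ l, cnss p M = c) (γ : MayaDiagram) :
    IsLeast (removalValues M c {p | p ∈ l} γ) (applyAll l M γ) := by
  induction l generalizing γ with
  | nil =>
    rw [show {p | p ∈ ([] : List ℤ)} = ∅ by simp, removalValues_empty]
    exact isLeast_singleton
  | cons a l ih =>
    obtain ⟨hal, hl⟩ := List.pairwise_cons.1 hl
    have ih := ih hl fun p hp => hc p (List.mem_cons_of_mem a hp)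
    have hset : {p | p ∈ a :: l} = insert a {p | p ∈ l} := by ext; simp
    rw [hset, applyAll_cons]
    by_cases ha : RemovableAt γ.beads a
    · rw [ftil_of_removableAt ha, hM.cnss_applyAll fun p hp => by have := hal p hp; omega,
        hc a (by simp),
        removalValues_insert_of_removableAt (s := {p | p ∈ l}) ha fun p hp => .inl (hal p hp)]
      exact (ih γ).union (((monotone_id (α := ℤ)).add_const c).map_isLeast (ih _))
    · rw [ftil_of_not_removableAt ha, removalValues_insert_of_not_removableAt ha]
      exact ih γ

end PreNSS

lemma setOf_reflTransGen_eq_removalValues {n i : ℤ} (hn : 2 ≤ n) (M : MayaDiagram → ℤ) (c : ℤ)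
    (γ : MayaDiagram) :
    {v : ℤ | ∃ μ : MayaDiagram, Relation.ReflTransGen (RemStep n i) γ μ ∧
      v = M μ + ((mayaSize γ : ℤ) - (mayaSize μ : ℤ)) * c} =
      removalValues M c {p | (p - i) % n = 0} γ := by
  ext v
  constructor
  · rintro ⟨μ, hμ, rfl⟩
    obtain ⟨R, hR, rfl⟩ := exists_removeBoxes_of_reflTransGen hn hμ
    refine ⟨R, hR, ?_⟩
    rw [MayaDiagram.mayaSize_removeBoxes fun r hr => (hR r hr).2]
    push_cast
    ring
  · rintro ⟨R, hR, rfl⟩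
    refine ⟨_, reflTransGen_remStep_removeBoxes hR, ?_⟩
    rw [MayaDiagram.mayaSize_removeBoxes fun r hr => (hR r hr).2]
    push_cast
    ring

lemma MayaDiagram.exists_natAbs_le_of_removableAt (γ : MayaDiagram) :
    ∃ B : ℕ, ∀ j, RemovableAt γ.beads j → j.natAbs ≤ B := by
  obtain ⟨N₀, N₁, h₀, h₁⟩ := γ.exists_bounds
  refine ⟨N₀.natAbs + N₁.natAbs, fun j hj => ?_⟩
  have := h₀ j hj.1
  have := h₁ _ hj.2
  omega

section progression

variable {n : ℤ} (i : ℤ) (K : ℕ)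

lemma pairwise_map_sort_Icc (hn : 2 ≤ n) :
    (((Finset.Icc (-(K : ℤ)) K).sort (· ≤ ·)).map fun k => i + k * n).Pairwise
      fun a b => a + 1 < b :=
  List.pairwise_map.2 <| (Finset.sortedLT_sort _).pairwise.imp fun {a b} hab => by nlinarith

lemma emod_eq_zero_of_mem_map_sort_Icc {p : ℤ}
    (hp : p ∈ ((Finset.Icc (-(K : ℤ)) K).sort (· ≤ ·)).map (fun k => i + k * n)) :
    (p - i) % n = 0 := by
  obtain ⟨k, -, rfl⟩ := List.mem_map.1 hp
  simp

lemma mem_map_sort_Icc_of_emod_eq_zero (hn : 0 < n) {j : ℤ} (hj : (j - i) % n = 0)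
    (hK : (j - i).natAbs ≤ K) :
    j ∈ ((Finset.Icc (-(K : ℤ)) K).sort (· ≤ ·)).map (fun k => i + k * n) := by
  obtain ⟨k, hk⟩ := Int.dvd_of_emod_eq_zero hj
  have : k.natAbs ≤ (j - i).natAbs := by
    rw [hk, Int.natAbs_mul]
    exact Nat.le_mul_of_pos_left _ (by omega)
  simp only [List.mem_map, Finset.mem_sort, Finset.mem_Icc]
  exact ⟨k, by omega, by linarith⟩

end progression

/-- for an n-periodic pre-NSS datum M and a residue i, the affine
operator f̂_i M = (∏_{k∈ℤ} f̃_{i+kn}) M is well-defined (the finite products over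
the intervals [−K, K] stabilize on each diagram γ) and is given by the closed
formula (f̂_i M)_γ = min over μ obtained from γ by removing boxes of color i mod n
of ( M_μ + |γ∖μ|·(φ̂_i(M) − 1) ). -/
theorem fhat_welldefined_formula (n : ℤ) (hn : 2 ≤ n) (M : MayaDiagram → ℤ)
    (hM : PreNSS M) (hper : PeriodicNSS n M) (i : ℤ) (γ : MayaDiagram) :
    ∃ K₀ : ℕ, ∀ K : ℕ, K₀ ≤ K →
      IsLeast {v : ℤ | ∃ μ : MayaDiagram,
          Relation.ReflTransGen (RemStep n i) γ μ ∧
          v = M μ + ((mayaSize γ : ℤ) - (mayaSize μ : ℤ)) * (phihat n i M - 1)}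
        (applyAll (((Finset.Icc (-(K : ℤ)) (K : ℤ)).sort (· ≤ ·)).map
          (fun k => i + k * n)) M γ) := by
  obtain ⟨B, hB⟩ := γ.exists_natAbs_le_of_removableAt
  refine ⟨B + i.natAbs, fun K hK => ?_⟩
  set l := ((Finset.Icc (-(K : ℤ)) (K : ℤ)).sort (· ≤ ·)).map (fun k => i + k * n)
  have hcolor : ∀ p ∈ l, (p - i) % n = 0 := fun p => emod_eq_zero_of_mem_map_sort_Icc i K
  have hsets : removalValues M (phihat n i M - 1) {p | (p - i) % n = 0} γ =
      removalValues M (phihat n i M - 1) {p | p ∈ l} γ :=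
    removalValues_congr fun j hj => ⟨fun hji =>
      mem_map_sort_Icc_of_emod_eq_zero i K (by omega) hji (by have := hB j hj; omega), hcolor j⟩
  rw [setOf_reflTransGen_eq_removalValues hn, hsets]
  refine hM.isLeast_applyAll (pairwise_map_sort_Icc i K hn) (fun p hp => ?_) γ
  rw [cnss_eq_of_dvd hM hper (Int.dvd_of_emod_eq_zero (hcolor p hp)),
    cnss_eq_phihat_sub_one (by omega) hM hper]
end

section
/- Removing boxes of colors i_1, then i_2, ..., then i_N from the downward-facing charged partition γ_I corresponds bijectively to adding boxes of the same colors (in the same order) to the upward-facing charged partition τ, provided the interval I is sufficiently large relative to N; moreover for every N such an interval I exists. -/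
/-- `SwapPath g js h` : the bead configuration h is obtained from g by
successively performing the box moves at the slots listed in js, each move
exchanging a black bead at position j with a white bead at position j + 1
(removing a box labeled j from a downward-facing charged partition, or
equivalently adding a box labeled j to an upward-facing one). -/
inductive SwapPath : (ℤ → Bool) → List ℤ → (ℤ → Bool) → Prop
  | nil (g : ℤ → Bool) : SwapPath g [] g
  | cons (g : ℤ → Bool) (j : ℤ) (js : List ℤ) (h : ℤ → Bool) :
      g j = true → g (j + 1) = false →
      SwapPath (Function.update (Function.update g j false) (j + 1) true) js h →
      SwapPath g (j :: js) h

/-!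
A box move at slot `j` only reads and writes the beads at `j` and `j + 1`, so a sequence of
moves is legal for two configurations alike as soon as they agree on an interval containing
all the slots involved. The configuration `γ_I` is white below `I` and black above it, and a
move needs a black bead followed by a white one, so every move on `γ_I` stays inside `I`,
where `γ_I` agrees with `τ`. Conversely `τ` is black below some `A` and white above some `B`;
each move pushes these bounds out by at most one, so `N` moves of `τ` stay within `N` of
`[A, B]`, hence inside `I` once `I` is large enough.
-/

open Function Set

def swapAt (g : ℤ → Bool) (j : ℤ) : ℤ → Bool :=
  update (update g j false) (j + 1) true

lemma swapAt_apply_of_ne {g : ℤ → Bool} {j k : ℤ} (hj : k ≠ j) (hj₁ : k ≠ j + 1) :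
    swapAt g j k = g k := by
  rw [swapAt, update_of_ne hj₁, update_of_ne hj]

lemma Set.EqOn.swapAt {g g' : ℤ → Bool} {s : Set ℤ} (h : EqOn g g' s) (j : ℤ) :
    EqOn (swapAt g j) (swapAt g' j) s := by
  intro k hk
  by_cases hj₁ : k = j + 1
  · simp [_root_.swapAt, hj₁]
  by_cases hj : k = j
  · simp [_root_.swapAt, hj]
  rw [swapAt_apply_of_ne hj hj₁, swapAt_apply_of_ne hj hj₁, h hk]

namespace SwapPath

lemma exists_of_eqOn {g g' h : ℤ → Bool} {js : List ℤ} {lo hi : ℤ}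
    (hp : SwapPath g js h) (hg : EqOn g g' (Icc lo hi)) (hjs : ∀ j ∈ js, j ∈ Ico lo hi) :
    ∃ h', SwapPath g' js h' := by
  induction hp generalizing g' with
  | nil g => exact ⟨g', .nil g'⟩
  | cons g j js h hj hj₁ _ ih =>
    obtain ⟨hlo, hhi⟩ := hjs j List.mem_cons_self
    obtain ⟨h', hp'⟩ := ih (hg.swapAt j) fun i hi => hjs i (List.mem_cons_of_mem _ hi)
    refine ⟨h', .cons g' j js h' ?_ ?_ hp'⟩
    · rw [← hg ⟨hlo, hhi.le⟩, hj]
    · rw [← hg ⟨by omega, by omega⟩, hj₁]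

lemma mem_Ico_of_white_black {g h : ℤ → Bool} {js : List ℤ} {a b : ℤ} (hp : SwapPath g js h)
    (hwhite : ∀ k < a, g k = false) (hblack : ∀ k, b < k → g k = true) :
    ∀ j ∈ js, j ∈ Ico a b := by
  induction hp with
  | nil => simp
  | cons g j js h hj hj₁ _ ih =>
    have haj : a ≤ j := by
      by_contra! hja
      simp [hwhite j hja] at hj
    have hjb : j < b := by
      by_contra! hbj
      simp [hblack (j + 1) (by omega)] at hj₁
    refine List.forall_mem_cons.2 ⟨⟨haj, hjb⟩, ih ?_ ?_⟩
    · exact fun k hk => (swapAt_apply_of_ne (by omega) (by omega)).trans (hwhite k hk)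
    · exact fun k hk => (swapAt_apply_of_ne (by omega) (by omega)).trans (hblack k hk)

lemma mem_Ico_of_black_white {g h : ℤ → Bool} {js : List ℤ} {A B : ℤ} (hp : SwapPath g js h)
    (hblack : ∀ k ≤ A, g k = true) (hwhite : ∀ k, B ≤ k → g k = false) :
    ∀ j ∈ js, j ∈ Ico (A - js.length) (B + js.length) := by
  induction hp generalizing A B with
  | nil => simp
  | cons g j js h hj hj₁ _ ih =>
    have hAj : A ≤ j := by
      by_contra! hjA
      simp [hblack (j + 1) (by omega)] at hj₁
    have hjB : j < B := by
      by_contra! hBj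
      simp [hwhite j hBj] at hj
    have hrest := ih (A := A - 1) (B := B + 1)
      (fun k hk => (swapAt_apply_of_ne (by omega) (by omega)).trans (hblack k (by omega)))
      (fun k hk => (swapAt_apply_of_ne (by omega) (by omega)).trans (hwhite k (by omega)))
    simp only [List.length_cons, Nat.cast_add, Nat.cast_one]
    refine List.forall_mem_cons.2 ⟨⟨by omega, by omega⟩, fun i hi => ?_⟩
    obtain ⟨h₁, h₂⟩ := hrest i hi
    constructor <;> omega

end SwapPath

lemma flipOutside_eqOn (τ : RBMaya) (a b : ℤ) : EqOn (flipOutside τ a b) τ.beads (Icc a b) :=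
  fun _ hk => if_pos hk

theorem swapPath_flipOutside_iff_general (τ : RBMaya) (N : ℕ) :
    ∃ a₀ b₀ : ℤ, ∀ a b : ℤ, a ≤ a₀ → b₀ ≤ b →
      ∀ js : List ℤ, js.length ≤ N →
        ((∃ g : ℤ → Bool, SwapPath (flipOutside τ a b) js g) ↔
          (∃ g : ℤ → Bool, SwapPath τ.beads js g)) := by
  obtain ⟨B, hB⟩ := τ.white_up
  obtain ⟨A, hA⟩ := τ.black_down
  refine ⟨A - N, B + N, fun a b ha hb js hlen => ⟨?_, ?_⟩⟩
  · rintro ⟨g, hp⟩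
    have hwhite : ∀ k < a, flipOutside τ a b k = false := fun k hk => by
      simp [flipOutside, show ¬(a ≤ k ∧ k ≤ b) by omega, hA k (by omega)]
    have hblack : ∀ k, b < k → flipOutside τ a b k = true := fun k hk => by
      simp [flipOutside, show ¬(a ≤ k ∧ k ≤ b) by omega, hB k (by omega)]
    exact hp.exists_of_eqOn (flipOutside_eqOn τ a b) (hp.mem_Ico_of_white_black hwhite hblack)
  · rintro ⟨g, hp⟩
    refine hp.exists_of_eqOn (flipOutside_eqOn τ a b).symm fun j hj => ?_
    have hN : (js.length : ℤ) ≤ N := by exact_mod_cast hlen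
    obtain ⟨h₁, h₂⟩ := hp.mem_Ico_of_black_white hA hB j hj
    constructor <;> omega

/-- for every N there is an interval I₀ = [a₀, b₀] such that for all
intervals I = [a, b] ⊇ I₀, performing at most N box-removals (of any sequence of
slots, hence of any sequence of colors mod n) on the downward-facing charged
partition γ_I = flipOutside τ a b is possible exactly when the corresponding
sequence of box-additions (at the same slots, hence with the same colors) is
possible on the upward-facing charged partition τ; this gives a color-preserving
bijection between removal sequences of length ≤ N from γ_I and addition
sequences of length ≤ N to τ. -/
theorem swapPath_flipOutside_iff (n : ℕ) (hn : 2 ≤ n) (τ : RBMaya) (N : ℕ) :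
    ∃ a₀ b₀ : ℤ, ∀ a b : ℤ, a ≤ a₀ → b₀ ≤ b →
      ∀ js : List ℤ, js.length ≤ N →
        ((∃ g : ℤ → Bool, SwapPath (flipOutside τ a b) js g) ↔
          (∃ g : ℤ → Bool, SwapPath τ.beads js g)) :=
  swapPath_flipOutside_iff_general τ N
end

section
/- Suppose S and T are crystals, each generated from a single weight-zero element by the f_i operators, with all elements reachable and e_i the partial inverse of f_i, and suppose M : S → T is a surjective map commuting with all f_i, with wt, and with ε_i. Then M is a crystal isomorphism (in particular injective). -/
/-!
Since `e_i` is the partial inverse of `f_i`, a map commuting with the `f_i` sends each defined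
`e_i b` to `e_i (M b)`; since `ε_i` detects whether `e_i` is defined and `M` preserves `ε_i`,
`M` commutes with the `e_i` everywhere. Injectivity then follows by induction on a word
reaching `a = f_i a'`: from `M a = M b` we get that `e_i b` is defined with the same image as
`a' = e_i a`, so `e_i b = a'` by induction and `b = f_i a' = a`. The induction starts at the
weight-zero element, which is alone in its fibre because `M` preserves weights.
-/

section

variable {I S T : Type*} {eS fS : I → S → Option S} {eT fT : I → T → Option T} {M : S → T}

theorem eT_map_eq_some_of_eS_eq_some (hinvS : ∀ i b b', eS i b = some b' ↔ fS i b' = some b)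
    (hinvT : ∀ i b b', eT i b = some b' ↔ fT i b' = some b)
    (hMf : ∀ i b, Option.map M (fS i b) = fT i (M b)) {i : I} {b b' : S}
    (h : eS i b = some b') : eT i (M b) = some (M b') := by
  rw [hinvT, ← hMf, (hinvS i b b').mp h, Option.map_some]

theorem map_eS_eq_eT (hinvS : ∀ i b b', eS i b = some b' ↔ fS i b' = some b)
    (hinvT : ∀ i b b', eT i b = some b' ↔ fT i b' = some b)
    (hMf : ∀ i b, Option.map M (fS i b) = fT i (M b))
    (hdef : ∀ i b, eS i b ≠ none ↔ eT i (M b) ≠ none) (i : I) (b : S) :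
    Option.map M (eS i b) = eT i (M b) := by
  cases h : eS i b with
  | none => exact (by simpa [h] using (hdef i b).not : eT i (M b) = none).symm
  | some b' => rw [Option.map_some, eT_map_eq_some_of_eS_eq_some hinvS hinvT hMf h]

theorem injective_of_map_eS_eq_eT (hinvS : ∀ i b b', eS i b = some b' ↔ fS i b' = some b)
    (hMe : ∀ i b, Option.map M (eS i b) = eT i (M b)) {s0 : S}
    (hfib0 : ∀ b, M b = M s0 → b = s0)
    (hgen : ∀ b : S, ∃ js : List I, js.foldl (fun ob j => ob.bind (fS j)) (some s0) = some b) :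
    Function.Injective M := by
  intro a b hab
  obtain ⟨js, hjs⟩ := hgen a
  induction js using List.reverseRecOn generalizing a b with
  | nil =>
    obtain rfl : s0 = a := Option.some.inj hjs
    exact (hfib0 b hab.symm).symm
  | append_singleton js i ih =>
    rw [List.foldl_append, List.foldl_cons, List.foldl_nil, Option.bind_eq_some_iff] at hjs
    obtain ⟨a', ha', hfa⟩ := hjs
    have hea : eS i a = some a' := (hinvS i a a').mpr hfa
    have hMeb : Option.map M (eS i b) = some (M a') := by
      rw [hMe, ← hab, ← hMe, hea, Option.map_some]
    obtain ⟨b', heb, hb'⟩ := Option.map_eq_some_iff.mp hMeb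
    obtain rfl : a' = b' := ih hb'.symm ha'
    exact Option.some.inj (hfa.symm.trans ((hinvS i b a').mp heb))

end

theorem crystal_surjective_morphism_is_iso_general {I S T : Type*}
    (eS fS : I → S → Option S) (wtS : S → (I →₀ ℤ)) (epsS : I → S → ℤ) (s0 : S)
    (eT fT : I → T → Option T) (wtT : T → (I →₀ ℤ)) (epsT : I → T → ℤ)
    (hwtS0 : wtS s0 = 0) (hS0uniq : ∀ b : S, wtS b = 0 → b = s0)
    (hinvS : ∀ i b b', eS i b = some b' ↔ fS i b' = some b)
    (hinvT : ∀ i b b', eT i b = some b' ↔ fT i b' = some b)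
    (hnormalS : ∀ i b, eS i b ≠ none ↔ 0 < epsS i b)
    (hnormalT : ∀ i b, eT i b ≠ none ↔ 0 < epsT i b)
    (hgenS : ∀ b : S, ∃ js : List I,
      js.foldl (fun ob j => ob.bind (fS j)) (some s0) = some b)
    (M : S → T) (hsurj : Function.Surjective M)
    (hMf : ∀ i b, Option.map M (fS i b) = fT i (M b))
    (hMwt : ∀ b, wtT (M b) = wtS b)
    (hMeps : ∀ i b, epsT i (M b) = epsS i b) :
    Function.Bijective M ∧ ∀ i b, Option.map M (eS i b) = eT i (M b) := by
  have hMe : ∀ i b, Option.map M (eS i b) = eT i (M b) :=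
    map_eS_eq_eT hinvS hinvT hMf fun i b => by rw [hnormalS, hnormalT, hMeps]
  have hfib0 : ∀ b, M b = M s0 → b = s0 := fun b h =>
    hS0uniq b (by rw [← hMwt, h, hMwt, hwtS0])
  exact ⟨⟨injective_of_map_eS_eq_eT hinvS hMe hfib0 hgenS, hsurj⟩, hMe⟩

/-- suppose S and T are crystals (with operators eS/fS resp. eT/fT,
weight functions into I →₀ ℤ, string functions epsS/epsT), each generated from a
single weight-zero element by the f_i operators, with e_i the partial inverse of
f_i, weights strictly decreasing by the simple root single i 1 under f_i, and
upper normal (e_i(b) ≠ 0 iff ε_i(b) > 0). If M : S → T is surjective and commutes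
with all f_i, with wt and with ε_i, then M is an isomorphism of crystals; in
particular M is injective and commutes with the e_i. -/
theorem crystal_surjective_morphism_is_iso {I S T : Type*}
    (eS fS : I → S → Option S) (wtS : S → (I →₀ ℤ)) (epsS : I → S → ℤ) (s0 : S)
    (eT fT : I → T → Option T) (wtT : T → (I →₀ ℤ)) (epsT : I → T → ℤ) (t0 : T)
    (hwtS0 : wtS s0 = 0) (hS0uniq : ∀ b : S, wtS b = 0 → b = s0)
    (hwtT0 : wtT t0 = 0) (hT0uniq : ∀ b : T, wtT b = 0 → b = t0)
    (hinvS : ∀ i b b', eS i b = some b' ↔ fS i b' = some b)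
    (hinvT : ∀ i b b', eT i b = some b' ↔ fT i b' = some b)
    (hfwtS : ∀ i b b', fS i b = some b' → wtS b' = wtS b - Finsupp.single i 1)
    (hfwtT : ∀ i b b', fT i b = some b' → wtT b' = wtT b - Finsupp.single i 1)
    (hnormalS : ∀ i b, eS i b ≠ none ↔ 0 < epsS i b)
    (hnormalT : ∀ i b, eT i b ≠ none ↔ 0 < epsT i b)
    (hgenS : ∀ b : S, ∃ js : List I,
      js.foldl (fun ob j => ob.bind (fS j)) (some s0) = some b)
    (hgenT : ∀ b : T, ∃ js : List I,
      js.foldl (fun ob j => ob.bind (fT j)) (some t0) = some b)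
    (M : S → T) (hsurj : Function.Surjective M)
    (hMf : ∀ i b, Option.map M (fS i b) = fT i (M b))
    (hMwt : ∀ b, wtT (M b) = wtS b)
    (hMeps : ∀ i b, epsT i (M b) = epsS i b) :
    Function.Bijective M ∧ ∀ i b, Option.map M (eS i b) = eT i (M b) :=
  crystal_surjective_morphism_is_iso_general eS fS wtS epsS s0 eT fT wtT epsT hwtS0 hS0uniq hinvS
    hinvT hnormalS hnormalT hgenS M hsurj hMf hMwt hMeps
end
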